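/- For any binary sequence x of length n and any positive integer t ≤ n, the cardinality of the deletion sphere satisfies C(‖x‖−t+1, t) ≤ #dS^t(x) ≤ C(‖x‖+t−1, t). -/

import Mathlib

open Filter Finset

/-- The number of runs of a binary sequence (maximal blocks of equal consecutive symbols). -/
def runsCount (x : List Bool) : ℕ := (x.destutter (· ≠ ·)).length

/-- The deletion sphere `dS^t(x)`: all sequences obtained from `x` by deleting `t` symbols,
i.e. the sublists of `x` of length `x.length - t`. -/
def delSphere (t : ℕ) (x : List Bool) : Set (List Bool) :=
  {y | y.Sublist x ∧ y.length = x.length - t}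

/-- `dS^t(X)` for a set `X` of sequences. -/
def delSphereSet (t : ℕ) (X : Set (List Bool)) : Set (List Bool) :=
  ⋃ x ∈ X, delSphere t x

/-- A `t`-deletion code of length `n`: a set of binary sequences of length `n`
with pairwise disjoint deletion spheres. -/
def IsDeletionCode (t n : ℕ) (C : Set (List Bool)) : Prop :=
  (∀ c ∈ C, c.length = n) ∧
  ∀ c ∈ C, ∀ d ∈ C, c ≠ d → delSphere t c ∩ delSphere t d = ∅

/-- A perfect `t`-deletion code of length `n`: the deletion spheres of codewords
cover all of `𝔹^{n-t}`. -/
def IsPerfectDeletionCode (t n : ℕ) (C : Set (List Bool)) : Prop :=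
  IsDeletionCode t n C ∧ delSphereSet t C = {y : List Bool | y.length = n - t}

/-- `M^t(n)`: the maximum cardinality of a `t`-deletion code of length `n`. -/
noncomputable def maxDelCodeSize (t n : ℕ) : ℕ :=
  sSup {m : ℕ | ∃ C : Set (List Bool), IsDeletionCode t n C ∧ C.ncard = m}

/-! A sequence with `r` runs is the concatenation of `r` constant blocks, and a subsequence
obtained by `t` deletions is determined by how many symbols it deletes from each block, so
`dS^t(x)` is the image of the `C(r+t-1, t)` ways of distributing `t` deletions over `r` blocks.
For the lower bound, when `a ≠ b` the sequences of `dS^{t+1}(a b L)` beginning with `b` and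
those beginning with `a` contain copies of `dS^t(L)` and `dS^{t+1}(b L)` respectively; as `L`
has at least `r - 2` runs, induction on the length follows Pascal's rule. -/

lemma runsCount_le_length (x : List Bool) : runsCount x ≤ x.length :=
  (List.destutter_sublist _ _).length_le

lemma runsCount_cons_cons_self (a : Bool) (L : List Bool) :
    runsCount (a :: a :: L) = runsCount (a :: L) := by
  rw [runsCount, List.destutter_cons_cons, if_neg (not_not.2 rfl), ← List.destutter_cons',
    runsCount]

lemma runsCount_cons_cons_of_ne {a b : Bool} (h : a ≠ b) (L : List Bool) :
    runsCount (a :: b :: L) = runsCount (b :: L) + 1 := by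
  rw [runsCount, List.destutter_cons_cons, if_pos h, List.length_cons, ← List.destutter_cons',
    runsCount]

lemma runsCount_cons_le (a : Bool) : ∀ L : List Bool, runsCount (a :: L) ≤ runsCount L + 1
  | [] => by simp [runsCount]
  | b :: L => by
    by_cases hab : a = b
    · subst hab; rw [runsCount_cons_cons_self]; omega
    · rw [runsCount_cons_cons_of_ne hab]

section Blocks

variable {α : Type*}

lemma length_flatten_ofFn_replicate {r : ℕ} (k : Fin r → ℕ) (b : Fin r → α) :
    (List.ofFn fun i => List.replicate (k i) (b i)).flatten.length = ∑ i, k i := by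
  simp [List.length_flatten, List.map_ofFn, Function.comp_def, List.sum_ofFn]

lemma exists_le_of_sublist_flatten_replicate {r : ℕ} (ℓ : Fin r → ℕ) (b : Fin r → α)
    {y : List α} (h : y.Sublist (List.ofFn fun i => List.replicate (ℓ i) (b i)).flatten) :
    ∃ k ≤ ℓ, y = (List.ofFn fun i => List.replicate (k i) (b i)).flatten := by
  induction r generalizing y with
  | zero => exact ⟨ℓ, le_rfl, by simpa using h⟩
  | succ r ih =>
    rw [List.ofFn_succ, List.flatten_cons, List.sublist_append_iff] at h
    obtain ⟨y₁, y₂, rfl, h₁, h₂⟩ := h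
    obtain ⟨k₀, hk₀, rfl⟩ := List.sublist_replicate_iff.1 h₁
    obtain ⟨k, hk, rfl⟩ := ih (fun i => ℓ i.succ) (fun i => b i.succ) h₂
    refine ⟨Fin.cons k₀ k, fun i => ?_, by simp [List.ofFn_succ]⟩
    cases i using Fin.cases
    · simpa using hk₀
    · simpa using hk _

end Blocks

lemma exists_eq_flatten_replicate_runsCount :
    ∀ x : List Bool, ∃ (ℓ : Fin (runsCount x) → ℕ) (b : Fin (runsCount x) → Bool),
      (∀ i, 0 < ℓ i) ∧ x = (List.ofFn fun i => List.replicate (ℓ i) (b i)).flatten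
  | [] => ⟨Fin.elim0, Fin.elim0, fun i => i.elim0, rfl⟩
  | [a] => ⟨fun _ => 1, fun _ => a, fun _ => one_pos, rfl⟩
  | a :: c :: L => by
    obtain ⟨ℓ, b, hpos, hL⟩ := exists_eq_flatten_replicate_runsCount (c :: L)
    by_cases hac : a = c
    · subst hac
      rw [runsCount_cons_cons_self]
      generalize runsCount (a :: L) = r at ℓ b hpos hL ⊢
      cases r with
      | zero => simp at hL
      | succ r =>
        rw [List.ofFn_succ, List.flatten_cons] at hL
        obtain ⟨m, hm⟩ := Nat.exists_eq_succ_of_ne_zero (hpos 0).ne'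
        rw [hm, List.replicate_succ, List.cons_append, List.cons.injEq] at hL
        refine ⟨Fin.cons (ℓ 0 + 1) (fun i => ℓ i.succ), b,
          Fin.cases (by simp) fun i => by simpa using hpos i.succ, ?_⟩
        rw [List.ofFn_succ, List.flatten_cons]
        simp [hm, List.replicate_succ, ← hL.1, hL.2]
    · rw [runsCount_cons_cons_of_ne hac]
      exact ⟨Fin.cons 1 ℓ, Fin.cons a b, Fin.cases one_pos hpos,
        by simp [List.ofFn_succ, ← hL]⟩

lemma delSphere_finite (t : ℕ) (x : List Bool) : (delSphere t x).Finite :=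
  x.sublists.toFinset.finite_toSet.subset fun y hy => by simpa using hy.1

lemma delSphere_nonempty (t : ℕ) (x : List Bool) : (delSphere t x).Nonempty :=
  ⟨x.take (x.length - t), List.take_sublist _ _, by simp⟩

lemma image_cons_subset_delSphere {t : ℕ} {x : List Bool} (a : Bool) (ht : t ≤ x.length) :
    (a :: ·) '' delSphere t x ⊆ delSphere t (a :: x) := by
  rintro _ ⟨y, ⟨hy, hlen⟩, rfl⟩
  exact ⟨hy.cons_cons a, by simp only [List.length_cons, hlen]; omega⟩

lemma ncard_delSphere_flatten_replicate_le_multichoose {r t : ℕ} (ℓ : Fin r → ℕ)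
    (b : Fin r → Bool) (ht : t ≤ ∑ i, ℓ i) :
    (delSphere t (List.ofFn fun i => List.replicate (ℓ i) (b i)).flatten).ncard ≤
      r.multichoose t := by
  classical
  -- `d i` is the number of symbols deleted from the `i`-th block.
  set G : (Fin r →₀ ℕ) → List Bool :=
    fun d => (List.ofFn fun i => List.replicate (ℓ i - d i) (b i)).flatten
  have hsub : delSphere t (List.ofFn fun i => List.replicate (ℓ i) (b i)).flatten ⊆
      G '' (Finset.univ.finsuppAntidiag t : Finset (Fin r →₀ ℕ)) := by
    rintro y ⟨hy, hlen⟩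
    obtain ⟨k, hk, rfl⟩ := exists_le_of_sublist_flatten_replicate ℓ b hy
    rw [length_flatten_ofFn_replicate, length_flatten_ofFn_replicate] at hlen
    refine ⟨Finsupp.equivFunOnFinite.symm (ℓ - k), ?_, ?_⟩
    · rw [Finset.mem_coe, Finset.mem_finsuppAntidiag]
      refine ⟨?_, Finset.subset_univ _⟩
      simp only [Finsupp.coe_equivFunOnFinite_symm, Pi.sub_apply]
      rw [Finset.sum_tsub_distrib _ fun i _ => hk i]
      omega
    · simp only [G, Finsupp.coe_equivFunOnFinite_symm, Pi.sub_apply]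
      congr
      ext1 i
      rw [Nat.sub_sub_self (hk i)]
  calc _ ≤ (G '' (Finset.univ.finsuppAntidiag t : Finset (Fin r →₀ ℕ))).ncard :=
        Set.ncard_le_ncard hsub ((Finset.finite_toSet _).image G)
    _ ≤ (Finset.univ.finsuppAntidiag t).card := by
        rw [← Set.ncard_coe_finset]; exact Set.ncard_image_le (Finset.finite_toSet _)
    _ = r.multichoose t := by
        rw [Finset.card_finsuppAntidiag_nat_eq_multichoose, Finset.card_univ, Fintype.card_fin]

theorem ncard_delSphere_le_multichoose {t : ℕ} {x : List Bool} (ht : t ≤ x.length) :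
    (delSphere t x).ncard ≤ (runsCount x).multichoose t := by
  obtain ⟨ℓ, b, -, hx⟩ := exists_eq_flatten_replicate_runsCount x
  have h := ncard_delSphere_flatten_replicate_le_multichoose ℓ b (t := t)
    (by rwa [← length_flatten_ofFn_replicate, ← hx])
  rwa [← hx] at h

lemma one_le_ncard_delSphere (t : ℕ) (x : List Bool) : 1 ≤ (delSphere t x).ncard :=
  (Set.ncard_pos (delSphere_finite t x)).2 (delSphere_nonempty t x)

lemma choose_le_ncard_delSphere_of_runsCount_le {t : ℕ} {x : List Bool} (h : runsCount x ≤ t) :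
    (runsCount x - t + 1).choose t ≤ (delSphere t x).ncard := by
  refine le_trans ?_ (one_le_ncard_delSphere t x)
  rw [Nat.sub_eq_zero_of_le h, zero_add]
  rcases t with _ | _ | t <;> simp [Nat.choose_eq_zero_of_lt]

lemma ncard_delSphere_le_ncard_delSphere_cons {t : ℕ} {x : List Bool} (a : Bool)
    (ht : t ≤ x.length) : (delSphere t x).ncard ≤ (delSphere t (a :: x)).ncard := by
  rw [← Set.ncard_image_of_injective _ (List.cons_injective (a := a))]
  exact Set.ncard_le_ncard (image_cons_subset_delSphere a ht) (delSphere_finite _ _)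

lemma ncard_delSphere_add_ncard_delSphere_le {a b : Bool} (hab : a ≠ b) {t : ℕ} {L : List Bool}
    (ht : t ≤ L.length) :
    (delSphere t L).ncard + (delSphere (t + 1) (b :: L)).ncard ≤
      (delSphere (t + 1) (a :: b :: L)).ncard := by
  have hsub : (b :: ·) '' delSphere t L ⊆ delSphere (t + 1) (a :: b :: L) := by
    rintro _ ⟨z, ⟨hz, hlen⟩, rfl⟩
    exact ⟨(hz.cons_cons b).cons a, by simp only [List.length_cons, hlen]; omega⟩
  have hdisj : Disjoint ((b :: ·) '' delSphere t L) ((a :: ·) '' delSphere (t + 1) (b :: L)) :=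
    Set.disjoint_left.2 fun _ ⟨_, _, hz⟩ ⟨_, _, hy⟩ =>
      hab (List.cons.inj (hy.trans hz.symm)).1
  have hb := Set.ncard_image_of_injective (delSphere t L) (List.cons_injective (a := b))
  have ha := Set.ncard_image_of_injective (delSphere (t + 1) (b :: L))
    (List.cons_injective (a := a))
  rw [← ha, ← hb,
    ← Set.ncard_union_eq hdisj ((delSphere_finite _ _).image _) ((delSphere_finite _ _).image _)]
  exact Set.ncard_le_ncard
    (Set.union_subset hsub (image_cons_subset_delSphere a (by simpa using ht)))
    (delSphere_finite _ _)

theorem choose_le_ncard_delSphere : ∀ (t : ℕ) (x : List Bool),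
    (runsCount x - t + 1).choose t ≤ (delSphere t x).ncard
  | 0, x => by simpa using one_le_ncard_delSphere 0 x
  | t + 1, [] => choose_le_ncard_delSphere_of_runsCount_le (by simp [runsCount])
  | t + 1, [_] => choose_le_ncard_delSphere_of_runsCount_le (by simp [runsCount])
  | t + 1, a :: b :: L => by
    by_cases htr : runsCount (a :: b :: L) ≤ t + 1
    · exact choose_le_ncard_delSphere_of_runsCount_le htr
    have hlen : runsCount (b :: L) ≤ L.length + 1 := runsCount_le_length (b :: L)
    by_cases hab : a = b
    · subst hab
      rw [runsCount_cons_cons_self] at htr ⊢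
      exact (choose_le_ncard_delSphere (t + 1) (a :: L)).trans
        (ncard_delSphere_le_ncard_delSphere_cons a (by rw [List.length_cons]; omega))
    · rw [runsCount_cons_cons_of_ne hab] at htr ⊢
      have hL := runsCount_cons_le b L
      calc (runsCount (b :: L) + 1 - (t + 1) + 1).choose (t + 1)
          = (runsCount (b :: L) - t).choose t + (runsCount (b :: L) - t).choose (t + 1) := by
            rw [← Nat.choose_succ_succ]; congr 1; omega
        _ ≤ (runsCount L - t + 1).choose t + (runsCount (b :: L) - (t + 1) + 1).choose (t + 1) :=
            add_le_add (Nat.choose_le_choose _ (by omega)) (le_of_eq (by congr 1; omega))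
        _ ≤ (delSphere t L).ncard + (delSphere (t + 1) (b :: L)).ncard :=
            add_le_add (choose_le_ncard_delSphere t L) (choose_le_ncard_delSphere (t + 1) (b :: L))
        _ ≤ (delSphere (t + 1) (a :: b :: L)).ncard :=
            ncard_delSphere_add_ncard_delSphere_le hab (by omega)

theorem delSphere_card_bounds_general (n t : ℕ) (htn : t ≤ n)
    (x : List Bool) (hx : x.length = n) :
    (runsCount x - t + 1).choose t ≤ (delSphere t x).ncard ∧
      (delSphere t x).ncard ≤ (runsCount x + t - 1).choose t := by
  rw [← Nat.multichoose_eq]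
  exact ⟨choose_le_ncard_delSphere t x, ncard_delSphere_le_multichoose (hx ▸ htn)⟩

/-- Levenshtein's bounds on the size of a deletion sphere:
`C(‖x‖−t+1, t) ≤ #dS^t(x) ≤ C(‖x‖+t−1, t)`. -/
theorem delSphere_card_bounds (n t : ℕ) (ht : 0 < t) (htn : t ≤ n)
    (x : List Bool) (hx : x.length = n) :
    (runsCount x - t + 1).choose t ≤ (delSphere t x).ncard ∧
      (delSphere t x).ncard ≤ (runsCount x + t - 1).choose t :=
  delSphere_card_bounds_general n t htn x hx
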